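/- (Hurwitz) Let d ≥ 1 and let a₁,…,aₙ be nonnegative integers with a₁ + ⋯ + aₙ = 2d. Then the form a₁·x₁^{2d} + ⋯ + aₙ·xₙ^{2d} − 2d·x₁^{a₁}⋯xₙ^{aₙ} belongs to Σ_{n,2d}²; that is, it is a finite sum of squares of real degree-d forms each having at most two monomials. -/

import Mathlib

open MvPolynomial Finset

/-- `F_{n,d}^k`: real forms of degree `d` in `n` variables with at most `k` monomials. -/
def IsFormK (n d k : ℕ) (h : MvPolynomial (Fin n) ℝ) : Prop :=
  h.IsHomogeneous d ∧ h.support.card ≤ k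

/-- `Σ_{n,2d}^k`: finite sums of squares of forms in `F_{n,d}^k`. -/
def SigmaSOS (n d k : ℕ) : Set (MvPolynomial (Fin n) ℝ) :=
  { p | ∃ (m : ℕ) (f : Fin m → MvPolynomial (Fin n) ℝ),
      (∀ j, IsFormK n d k (f j)) ∧ p = ∑ j, (f j) ^ 2 }

/-!
Write `a = b + c` with `|b| = |c| = d`. Then the Hurwitz form of `a` is
`E(b) + E(c) + d (x^b - x^c)²`, where `E(b) = ∑ bₖ xₖ^(2d) - d x^(2b)`. The even forms `E(b)`
are handled by induction on the support of `b`: if `bᵢ = p` and `bⱼ = q` are both positive,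
moving all of `p + q` onto coordinate `i`, resp. `j`, gives exponent vectors `b'`, `b''` of
smaller support, and
`(p + q) E(b) = p E(b') + q E(b'') + d (p x^(2b') + q x^(2b'') - (p + q) x^(2b))`.
The last bracket is a sum of squares of binomials because, with `r` the rest of `b`, the sequence
`t ↦ (x^r xᵢ^(p+q-t) xⱼ^t)²` is discrete convex with squares of binomials as second differences.
-/

namespace SigmaSOS

variable {n d k : ℕ}

theorem zero_mem : (0 : MvPolynomial (Fin n) ℝ) ∈ SigmaSOS n d k :=
  ⟨0, Fin.elim0, fun j => j.elim0, by simp⟩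

theorem add_mem {p q : MvPolynomial (Fin n) ℝ} (hp : p ∈ SigmaSOS n d k)
    (hq : q ∈ SigmaSOS n d k) : p + q ∈ SigmaSOS n d k := by
  obtain ⟨m₁, f, hf, rfl⟩ := hp
  obtain ⟨m₂, g, hg, rfl⟩ := hq
  refine ⟨m₁ + m₂, Fin.append f g, fun j => ?_, by simp [Fin.sum_univ_add]⟩
  induction j using Fin.addCases <;> simp [hf, hg]

def toAddSubmonoid (n d k : ℕ) : AddSubmonoid (MvPolynomial (Fin n) ℝ) where
  carrier := SigmaSOS n d k
  add_mem' := add_mem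
  zero_mem' := zero_mem

theorem nsmul_mem (c : ℕ) {p : MvPolynomial (Fin n) ℝ} (hp : p ∈ SigmaSOS n d k) :
    c • p ∈ SigmaSOS n d k :=
  (toAddSubmonoid n d k).nsmul_mem hp c

theorem sq_mem {f : MvPolynomial (Fin n) ℝ} (hf : IsFormK n d k f) : f ^ 2 ∈ SigmaSOS n d k :=
  ⟨1, fun _ => f, fun _ => hf, by simp⟩

theorem smul_mem {c : ℝ} (hc : 0 ≤ c) {p : MvPolynomial (Fin n) ℝ} (hp : p ∈ SigmaSOS n d k) :
    c • p ∈ SigmaSOS n d k := by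
  obtain ⟨m, f, hf, rfl⟩ := hp
  refine ⟨m, fun j => √c • f j, fun j => ⟨?_, ?_⟩, ?_⟩
  · simpa only [smul_eq_C_mul] using (hf j).1.C_mul _
  · exact (card_le_card support_smul).trans (hf j).2
  · simp only [smul_sum, smul_pow, Real.sq_sqrt hc]

end SigmaSOS

section DiscreteConvexity

variable {A : Type*} [AddCommGroup A] (K : AddSubmonoid A) {ν : ℕ → A}

theorem AddSubmonoid.first_diff_sub_mem_of_second_diff_mem {m : ℕ}
    (hν : ∀ t, t + 2 ≤ m → ν t - 2 • ν (t + 1) + ν (t + 2) ∈ K) {t u : ℕ} (htu : t ≤ u)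
    (hu : u + 1 ≤ m) : (ν (u + 1) - ν u) - (ν (t + 1) - ν t) ∈ K := by
  induction u, htu using Nat.le_induction with
  | base => simp
  | succ u htu ih =>
    have h := K.add_mem (ih (by omega)) (hν u (by omega))
    convert h using 1
    simp only [two_nsmul]
    abel

/-- Discrete convex sequences lie below their chords, in the order given by the cone `K`. -/
theorem AddSubmonoid.chord_sub_mem_of_second_diff_mem (p q : ℕ)
    (hν : ∀ t, t + 2 ≤ p + q → ν t - 2 • ν (t + 1) + ν (t + 2) ∈ K) :
    p • ν 0 + q • ν (p + q) - (p + q) • ν q ∈ K := by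
  have hsum : p • ν 0 + q • ν (p + q) - (p + q) • ν q =
      ∑ t ∈ range q, ∑ s ∈ range p,
        ((ν (q + (s + 1)) - ν (q + s)) - (ν (t + 1) - ν t)) := by
    have inner : ∀ t, ∑ s ∈ range p, ((ν (q + (s + 1)) - ν (q + s)) - (ν (t + 1) - ν t)) =
        (ν (q + p) - ν q) - p • (ν (t + 1) - ν t) := fun t => by
      rw [sum_sub_distrib, sum_range_sub (fun s => ν (q + s)), sum_const, card_range, add_zero]
    rw [sum_congr rfl fun t _ => inner t, sum_sub_distrib, sum_const, card_range, ← smul_sum,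
      sum_range_sub ν, add_comm q p]
    simp only [smul_sub, add_smul]
    abel
  rw [hsum]
  refine K.sum_mem fun t ht => K.sum_mem fun s hs => ?_
  rw [mem_range] at ht hs
  exact K.first_diff_sub_mem_of_second_diff_mem (u := q + s) hν (by omega) (by omega)

end DiscreteConvexity

theorem Finset.sum_add_pi_single {ι M : Type*} [Fintype ι] [DecidableEq ι] [AddCommMonoid M]
    (r : ι → M) (i : ι) (e : M) : ∑ k, (r + Pi.single i e : ι → M) k = ∑ k, r k + e := by
  simp [sum_add_distrib]

section Monomials

variable {n : ℕ}

noncomputable def xPow (u : Fin n → ℕ) : MvPolynomial (Fin n) ℝ :=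
  ∏ k, X k ^ u k

theorem xPow_add (u v : Fin n → ℕ) : xPow (u + v) = xPow u * xPow v := by
  simp only [xPow, Pi.add_apply, pow_add, prod_mul_distrib]

theorem xPow_single (i : Fin n) (e : ℕ) : xPow (Pi.single i e) = X i ^ e := by
  rw [xPow, prod_eq_single i (fun k _ hk => by simp [hk]) (by simp), Pi.single_eq_same]

theorem isHomogeneous_xPow (u : Fin n → ℕ) : (xPow u).IsHomogeneous (∑ k, u k) :=
  IsHomogeneous.prod _ _ _ fun k _ => isHomogeneous_X_pow k (u k)

theorem MvPolynomial.card_support_mul_le_one {σ R : Type*} [CommSemiring R]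
    {p q : MvPolynomial σ R} (hp : #p.support ≤ 1) (hq : #q.support ≤ 1) :
    #(p * q).support ≤ 1 := by
  classical
  open scoped Pointwise in
  calc #(p * q).support ≤ #(p.support + q.support) := card_le_card (support_mul p q)
    _ ≤ #p.support * #q.support := card_add_le
    _ ≤ 1 * 1 := Nat.mul_le_mul hp hq

theorem card_support_xPow_le_one (u : Fin n → ℕ) : #(xPow u).support ≤ 1 :=
  prod_induction _ (fun p : MvPolynomial (Fin n) ℝ => #p.support ≤ 1)
    (fun _ _ => card_support_mul_le_one) (by simp) fun k _ => by simp [support_X_pow]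

theorem isFormK_xPow_sub_xPow {d : ℕ} {u v : Fin n → ℕ} (hu : ∑ k, u k = d)
    (hv : ∑ k, v k = d) : IsFormK n d 2 (xPow u - xPow v) := by
  classical
  refine ⟨(hu ▸ isHomogeneous_xPow u).sub (hv ▸ isHomogeneous_xPow v), ?_⟩
  calc #(xPow u - xPow v).support ≤ #((xPow u).support ∪ (xPow v).support) :=
        card_le_card (support_sub _ _ _)
    _ ≤ #(xPow u).support + #(xPow v).support := card_union_le _ _
    _ ≤ 2 := add_le_add (card_support_xPow_le_one u) (card_support_xPow_le_one v)

end Monomials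

section AgiForms

variable {n : ℕ}

noncomputable def weightedPowerSum (d : ℕ) : (Fin n → ℕ) →+ MvPolynomial (Fin n) ℝ where
  toFun u := ∑ k, C (u k : ℝ) * X k ^ (2 * d)
  map_zero' := by simp
  map_add' u v := by simp [add_mul, sum_add_distrib]

theorem weightedPowerSum_apply (d : ℕ) (u : Fin n → ℕ) :
    weightedPowerSum d u = ∑ k, C (u k : ℝ) * X k ^ (2 * d) :=
  rfl

/-- Half the Hurwitz form `∑ 2bₖ xₖ^(2d) - 2d x^(2b)` of an even exponent vector `2b`. -/
noncomputable def evenAgiForm (d : ℕ) (b : Fin n → ℕ) : MvPolynomial (Fin n) ℝ :=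
  weightedPowerSum d b - C (d : ℝ) * xPow b ^ 2

theorem evenAgiForm_zero : evenAgiForm 0 (0 : Fin n → ℕ) = 0 := by
  simp [evenAgiForm]

theorem evenAgiForm_single (i : Fin n) (d : ℕ) : evenAgiForm d (Pi.single i d) = 0 := by
  have h : weightedPowerSum d (Pi.single i d) = C (d : ℝ) * X i ^ (2 * d) :=
    (weightedPowerSum_apply d _).trans <|
      (sum_eq_single i (fun k _ hk => by simp [hk]) (by simp)).trans (by simp)
  rw [evenAgiForm, h, xPow_single, ← pow_mul, mul_comm d, sub_self]

end AgiForms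

section Merge

variable {n d : ℕ}

theorem sq_sub_two_nsmul_sq_add_sq {R : Type*} [CommRing R] {x y z : R} (h : x * z = y ^ 2) :
    x ^ 2 - 2 • y ^ 2 + z ^ 2 = (x - z) ^ 2 := by
  rw [← h]
  ring

theorem chord_sub_xPow_sq_mem {p q : ℕ} (r : Fin n → ℕ) (i j : Fin n)
    (hd : ∑ k, r k + (p + q) = d) :
    p • xPow (r + Pi.single i (p + q)) ^ 2 + q • xPow (r + Pi.single j (p + q)) ^ 2 -
      (p + q) • xPow (r + Pi.single i p + Pi.single j q) ^ 2 ∈ SigmaSOS n d 2 := by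
  set m := p + q
  set v : ℕ → Fin n → ℕ := fun t => r + Pi.single i (m - t) + Pi.single j t
  have hdeg : ∀ t ≤ m, ∑ k, v t k = d := fun t ht => by
    simp only [v, sum_add_pi_single]
    omega
  have hgeom : ∀ t, t + 2 ≤ m → xPow (v t) * xPow (v (t + 2)) = xPow (v (t + 1)) ^ 2 :=
    fun t ht => by
      rw [sq, ← xPow_add, ← xPow_add]
      congr 1
      funext k
      simp only [v, Pi.add_apply, Pi.single_apply]
      split_ifs <;> omega
  have hchord := (SigmaSOS.toAddSubmonoid n d 2).chord_sub_mem_of_second_diff_mem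
    (ν := fun t => xPow (v t) ^ 2) p q fun t ht => by
      rw [sq_sub_two_nsmul_sq_add_sq (hgeom t ht)]
      exact SigmaSOS.sq_mem (isFormK_xPow_sub_xPow (hdeg t (by omega)) (hdeg (t + 2) ht))
  simp only [v, m, Nat.sub_zero, Nat.sub_self, Nat.add_sub_cancel, Pi.single_zero,
    add_zero] at hchord
  exact hchord

theorem nsmul_evenAgiForm_eq {p q : ℕ} (r : Fin n → ℕ) (i j : Fin n) :
    (p + q) • evenAgiForm d (r + Pi.single i p + Pi.single j q) =
      p • evenAgiForm d (r + Pi.single i (p + q)) + q • evenAgiForm d (r + Pi.single j (p + q)) +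
        d • (p • xPow (r + Pi.single i (p + q)) ^ 2 + q • xPow (r + Pi.single j (p + q)) ^ 2 -
          (p + q) • xPow (r + Pi.single i p + Pi.single j q) ^ 2) := by
  have hexp : (p + q) • (r + Pi.single i p + Pi.single j q) =
      p • (r + Pi.single i (p + q)) + q • (r + Pi.single j (p + q)) := by
    funext k
    simp only [Pi.add_apply, Pi.smul_apply, Pi.single_apply, smul_eq_mul]
    split_ifs <;> ring
  have hsum : (p + q) • weightedPowerSum d (r + Pi.single i p + Pi.single j q) =
      p • weightedPowerSum d (r + Pi.single i (p + q)) +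
        q • weightedPowerSum d (r + Pi.single j (p + q)) := by
    rw [← map_nsmul, hexp, map_add, map_nsmul, map_nsmul]
  rw [evenAgiForm, evenAgiForm, evenAgiForm, smul_sub, smul_sub, smul_sub, hsum]
  simp only [nsmul_eq_mul, map_natCast]
  push_cast
  ring

theorem evenAgiForm_mem_of_merge {p q : ℕ} (r : Fin n → ℕ) (i j : Fin n) (hm : 0 < p + q)
    (hd : ∑ k, r k + (p + q) = d)
    (hi : evenAgiForm d (r + Pi.single i (p + q)) ∈ SigmaSOS n d 2)
    (hj : evenAgiForm d (r + Pi.single j (p + q)) ∈ SigmaSOS n d 2) :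
    evenAgiForm d (r + Pi.single i p + Pi.single j q) ∈ SigmaSOS n d 2 := by
  have hmul : (p + q) • evenAgiForm d (r + Pi.single i p + Pi.single j q) ∈ SigmaSOS n d 2 := by
    rw [nsmul_evenAgiForm_eq]
    exact SigmaSOS.add_mem
      (SigmaSOS.add_mem (SigmaSOS.nsmul_mem p hi) (SigmaSOS.nsmul_mem q hj))
      (SigmaSOS.nsmul_mem d (chord_sub_xPow_sq_mem r i j hd))
  have hm' : ((p + q : ℕ) : ℝ) ≠ 0 := by positivity
  rw [← inv_smul_smul₀ hm' (evenAgiForm d _), Nat.cast_smul_eq_nsmul]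
  exact SigmaSOS.smul_mem (by positivity) hmul

end Merge

section EvenCase

variable {n d : ℕ}

theorem evenAgiForm_eq_zero_of_pairwise {b : Fin n → ℕ} (hb : ∑ k, b k = d)
    (hpair : ∀ i j, i ≠ j → b i ≠ 0 → b j = 0) : evenAgiForm d b = 0 := by
  by_cases hzero : ∀ k, b k = 0
  · obtain rfl : b = 0 := funext hzero
    obtain rfl : d = 0 := by simpa using hb.symm
    exact evenAgiForm_zero
  · push Not at hzero
    obtain ⟨i, hi⟩ := hzero
    have hsingle : b = Pi.single i (b i) := funext fun k => by
      by_cases hk : k = i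
      · simp [hk]
      · simp [hk, hpair i k (Ne.symm hk) hi]
    rw [hsingle] at hb ⊢
    simp only [sum_pi_single', mem_univ, if_true] at hb
    rw [hb]
    exact evenAgiForm_single i d

theorem evenAgiForm_mem_of_support_subset (s : Finset (Fin n)) :
    ∀ b : Fin n → ℕ, (∀ k ∉ s, b k = 0) → ∑ k, b k = d → evenAgiForm d b ∈ SigmaSOS n d 2 := by
  induction s using Finset.strongInduction with
  | H s ih =>
  intro b hbs hb
  by_cases hpair : ∃ i j, i ≠ j ∧ b i ≠ 0 ∧ b j ≠ 0
  · obtain ⟨i, j, hij, hi, hj⟩ := hpair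
    have hi_mem : i ∈ s := by_contra fun h => hi (hbs i h)
    have hj_mem : j ∈ s := by_contra fun h => hj (hbs j h)
    set r : Fin n → ℕ := fun k => if k = i ∨ k = j then 0 else b k
    have hsplit : b = r + Pi.single i (b i) + Pi.single j (b j) := funext fun k => by
      by_cases hki : k = i
      · simp [r, hki, hij]
      · by_cases hkj : k = j <;> simp [r, hki, hkj, hij.symm]
    have hr : ∑ k, r k + (b i + b j) = d := by
      rw [← hb]
      conv_rhs => rw [hsplit]
      rw [sum_add_pi_single, sum_add_pi_single, add_assoc]
    have hri : ∀ k ∉ s.erase j, (r + Pi.single i (b i + b j) : Fin n → ℕ) k = 0 := fun k hk => by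
      rcases not_and_or.mp (mem_erase.not.mp hk) with hkj | hks
      · simp [r, not_not.mp hkj, hij.symm]
      · have hki : k ≠ i := fun h => hks (h ▸ hi_mem)
        simp [r, hki, hbs k hks]
    have hrj : ∀ k ∉ s.erase i, (r + Pi.single j (b i + b j) : Fin n → ℕ) k = 0 := fun k hk => by
      rcases not_and_or.mp (mem_erase.not.mp hk) with hki | hks
      · simp [r, not_not.mp hki, hij]
      · have hkj : k ≠ j := fun h => hks (h ▸ hj_mem)
        simp [r, hkj, hbs k hks]
    rw [hsplit]
    refine evenAgiForm_mem_of_merge r i j (by omega) hr ?_ ?_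
    · exact ih _ (erase_ssubset hj_mem) _ hri (by rw [sum_add_pi_single, hr])
    · exact ih _ (erase_ssubset hi_mem) _ hrj (by rw [sum_add_pi_single, hr])
  · push Not at hpair
    rw [evenAgiForm_eq_zero_of_pairwise hb hpair]
    exact SigmaSOS.zero_mem

theorem evenAgiForm_mem {b : Fin n → ℕ} (hb : ∑ k, b k = d) : evenAgiForm d b ∈ SigmaSOS n d 2 :=
  evenAgiForm_mem_of_support_subset univ b (by simp) hb

end EvenCase

theorem exists_add_eq_of_sum_eq_two_mul {ι : Type*} [Fintype ι] {a : ι → ℕ} {d : ℕ}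
    (ha : ∑ i, a i = 2 * d) : ∃ b c : ι → ℕ, b + c = a ∧ ∑ i, b i = d ∧ ∑ i, c i = d := by
  obtain ⟨g, hga, hg⟩ := Finsupp.exists_le_degree_eq (Finsupp.equivFunOnFinite.symm a) d
    (by simp [Finsupp.degree_eq_sum, ha, two_mul])
  have hbc : ⇑g + (a - ⇑g) = a := funext fun i => Nat.add_sub_cancel' (hga i)
  have hb : ∑ i, g i = d := by rw [← hg, Finsupp.degree_eq_sum]
  refine ⟨g, a - g, hbc, hb, ?_⟩
  have hsum := congrArg (fun u : ι → ℕ => ∑ i, u i) hbc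
  simp only [Pi.add_apply, sum_add_distrib, hb, ha] at hsum
  omega

theorem weightedPowerSum_sub_eq_evenAgiForm_add {n d : ℕ} {a b c : Fin n → ℕ} (hbc : b + c = a) :
    weightedPowerSum d a - C ((2 * d : ℕ) : ℝ) * xPow a =
      evenAgiForm d b + evenAgiForm d c + d • (xPow b - xPow c) ^ 2 := by
  rw [evenAgiForm, evenAgiForm, ← hbc, map_add, xPow_add]
  simp only [nsmul_eq_mul, map_natCast]
  push_cast
  ring

theorem hurwitz_agi_form_is_sobs (n d : ℕ)
    (a : Fin n → ℕ) (ha : ∑ i, a i = 2 * d) :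
    (∑ i, C ((a i : ℝ)) * X i ^ (2 * d)) -
        C ((2 * d : ℕ) : ℝ) * ∏ i, X i ^ (a i) ∈ SigmaSOS n d 2 := by
  obtain ⟨b, c, hbc, hb, hc⟩ := exists_add_eq_of_sum_eq_two_mul ha
  change weightedPowerSum d a - C ((2 * d : ℕ) : ℝ) * xPow a ∈ SigmaSOS n d 2
  rw [weightedPowerSum_sub_eq_evenAgiForm_add hbc]
  exact SigmaSOS.add_mem (SigmaSOS.add_mem (evenAgiForm_mem hb) (evenAgiForm_mem hc))
    (SigmaSOS.nsmul_mem d (SigmaSOS.sq_mem (isFormK_xPow_sub_xPow hb hc)))
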